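/- Let Λ be a row-finite k-graph with no sources. The assignments H ↦ ⟨H⟩ (the ℤ^k-order ideal of T_Λ generated by {v(0) : v ∈ H}) and J ↦ H_J := {v : v(0) ∈ J} are mutually inverse, order-preserving bijections between the lattice of hereditary saturated subsets of Λ⁰ and the lattice of ℤ^k-order ideals of T_Λ; hence these lattices are isomorphic. -/

import Mathlib

/-!
For a hereditary saturated `H`, the property "only vertices of `H` occur" is invariant under the
congruence defining `T_Λ`: the generating relation `v(n) ~ Σ_{α ∈ vΛ^{eᵢ}} s(α)(n + eᵢ)`
preserves it in one direction because `H` is hereditary and in the other because it is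
saturated. Hence `v(0) ≤ x` with `x ∈ ⟨H⟩` forces `v ∈ H`. Conversely, by downward closure and
`ℤᵏ`-invariance an element of `T_Λ` lies in an order ideal `J` exactly when every vertex occurring
in a representative lies in `H_J`; this gives `⟨H_J⟩ = J`, and combined with the iterated relation
`v(0) = Σ_{λ ∈ vΛⁿ} s(λ)(n)` it shows that `H_J` is hereditary and saturated.
-/

/-- A (small) `k`-graph: a small category `Λ` with vertex set `V`, path set `P`,
range and source maps `r, s`, a degree functor `d : Λ → ℕᵏ` satisfying the
unique factorization property. -/
structure KGraph (k : ℕ) where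
  V : Type
  P : Type
  r : P → V
  s : P → V
  d : P → Fin k → ℕ
  ident : V → P
  comp : (p q : P) → s p = r q → P
  r_ident : ∀ v, r (ident v) = v
  s_ident : ∀ v, s (ident v) = v
  d_ident : ∀ v, d (ident v) = 0
  r_comp : ∀ p q h, r (comp p q h) = r p
  s_comp : ∀ p q h, s (comp p q h) = s q
  d_comp : ∀ p q h, d (comp p q h) = d p + d q
  ident_comp : ∀ (p : P) (h : s (ident (r p)) = r p), comp (ident (r p)) p h = p
  comp_ident : ∀ (p : P) (h : s p = r (ident (s p))), comp p (ident (s p)) h = p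
  comp_assoc : ∀ (p q t : P) (h1 : s p = r q) (h2 : s q = r t)
      (h3 : s (comp p q h1) = r t) (h4 : s p = r (comp q t h2)),
      comp (comp p q h1) t h3 = comp p (comp q t h2) h4
  factor : ∀ (p : P) (m n : Fin k → ℕ), d p = m + n →
      ∃! qt : P × P, ∃ h : s qt.1 = r qt.2,
        comp qt.1 qt.2 h = p ∧ d qt.1 = m ∧ d qt.2 = n

namespace KGraph

variable {k : ℕ}

/-- `vΛⁿ`, the set of paths with range `v` and degree `n`. -/
def pathsSet (Λ : KGraph k) (v : Λ.V) (n : Fin k → ℕ) : Set Λ.P :=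
  {p | Λ.r p = v ∧ Λ.d p = n}

/-- `Λ` is row-finite if every `vΛⁿ` is finite. -/
def RowFinite (Λ : KGraph k) : Prop := ∀ v n, (Λ.pathsSet v n).Finite

/-- `Λ` has no sources if every `vΛⁿ` is nonempty. -/
def NoSources (Λ : KGraph k) : Prop := ∀ v n, (Λ.pathsSet v n).Nonempty

/-- The element `Σ_{λ ∈ vΛⁿ} s(λ)` of the free commutative monoid `ℕ^(Λ⁰)`. -/
noncomputable def vSum (Λ : KGraph k) (hfin : Λ.RowFinite) (v : Λ.V) (n : Fin k → ℕ) :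
    Λ.V →₀ ℕ :=
  ∑ p ∈ (hfin v n).toFinset, Finsupp.single (Λ.s p) 1

end KGraph

namespace KGraph

/-- The free commutative monoid on `Λ⁰ × ℤᵏ`. -/
abbrev TalF (Λ : KGraph k) : Type := (Λ.V × (Fin k → ℤ)) →₀ ℕ

/-- The defining relations of the talented monoid:
`v(n) = Σ_{α ∈ vΛ^{e_i}} s(α)(n + e_i)`. -/
noncomputable def TalRel (Λ : KGraph k) (hfin : Λ.RowFinite) : TalF Λ → TalF Λ → Prop :=
  fun a b => ∃ (v : Λ.V) (n : Fin k → ℤ) (i : Fin k),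
    a = Finsupp.single (v, n) 1 ∧
    b = ∑ p ∈ (hfin v (Pi.single i 1)).toFinset,
          Finsupp.single (Λ.s p, n + Pi.single i 1) 1

/-- The congruence generated by the defining relations of the talented monoid. -/
noncomputable def TalCon (Λ : KGraph k) (hfin : Λ.RowFinite) : AddCon (TalF Λ) :=
  addConGen (TalRel Λ hfin)

/-- The talented monoid `T_Λ`. -/
abbrev Tal (Λ : KGraph k) (hfin : Λ.RowFinite) : Type := (TalCon Λ hfin).Quotient

/-- The quotient map `ℕ^(Λ⁰ × ℤᵏ) → T_Λ`. -/
noncomputable def tmk (Λ : KGraph k) (hfin : Λ.RowFinite) : TalF Λ → Tal Λ hfin :=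
  (TalCon Λ hfin).mk'

/-- Shift of states on the free commutative monoid; it induces the `ℤᵏ`-action on `T_Λ`. -/
noncomputable def shiftF (Λ : KGraph k) (p : Fin k → ℤ) : TalF Λ → TalF Λ :=
  Finsupp.mapDomain (fun q => (q.1, q.2 + p))

/-- A `ℤᵏ`-order ideal of `T_Λ`: a submonoid, downward closed in the algebraic
preorder, and closed under the `ℤᵏ`-action (expressed on representatives). -/
noncomputable def IsOrderIdeal (Λ : KGraph k) (hfin : Λ.RowFinite)
    (J : Set (Tal Λ hfin)) : Prop :=
  (0 : Tal Λ hfin) ∈ J ∧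
  (∀ a b, a ∈ J → b ∈ J → a + b ∈ J) ∧
  (∀ a b : Tal Λ hfin, a + b ∈ J → a ∈ J) ∧
  (∀ (p : Fin k → ℤ) (a : TalF Λ), tmk Λ hfin a ∈ J → tmk Λ hfin (shiftF Λ p a) ∈ J)

/-- `H ⊆ Λ⁰` is hereditary. -/
def Hereditary (Λ : KGraph k) (H : Set Λ.V) : Prop :=
  ∀ p : Λ.P, Λ.r p ∈ H → Λ.s p ∈ H

/-- `H ⊆ Λ⁰` is saturated. -/
def Saturated (Λ : KGraph k) (H : Set Λ.V) : Prop :=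
  ∀ (v : Λ.V) (n : Fin k → ℕ),
    (∀ p : Λ.P, Λ.r p = v → Λ.d p = n → Λ.s p ∈ H) → v ∈ H

/-- The `ℤᵏ`-order ideal of `T_Λ` generated by a set `X ⊆ Λ⁰` of vertices:
all `x` with `x ≤ Σᵢ ⁿⁱvᵢ` for finitely many `vᵢ ∈ X`, `nᵢ ∈ ℤᵏ`. -/
noncomputable def genIdeal (Λ : KGraph k) (hfin : Λ.RowFinite) (X : Set Λ.V) :
    Set (Tal Λ hfin) :=
  {x | ∃ b : TalF Λ, (∀ q ∈ b.support, q.1 ∈ X) ∧ ∃ z, x + z = tmk Λ hfin b}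

end KGraph

lemma AddConGen.Rel.iff_of_add_iff {M : Type*} [Add M] {r : M → M → Prop} {P : M → Prop}
    (hP : ∀ a b, P (a + b) ↔ P a ∧ P b) (hr : ∀ a b, r a b → (P a ↔ P b)) {a b : M}
    (h : AddConGen.Rel r a b) : P a ↔ P b := by
  induction h with
  | of a b hab => exact hr a b hab
  | refl => rfl
  | symm _ ih => exact ih.symm
  | trans _ _ ih₁ ih₂ => exact ih₁.trans ih₂
  | add _ _ ih₁ ih₂ => rw [hP, hP, ih₁, ih₂]

namespace KGraph

variable {k : ℕ} (Λ : KGraph k)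

@[simp]
lemma mem_pathsSet {v : Λ.V} {n : Fin k → ℕ} {p : Λ.P} :
    p ∈ Λ.pathsSet v n ↔ Λ.r p = v ∧ Λ.d p = n :=
  Iff.rfl

lemma eq_ident_of_d_eq_zero {p : Λ.P} (h : Λ.d p = 0) : p = Λ.ident (Λ.r p) := by
  have hsr : Λ.s (Λ.ident (Λ.r p)) = Λ.r p := Λ.s_ident _
  have hsp : Λ.s p = Λ.r (Λ.ident (Λ.s p)) := (Λ.r_ident _).symm
  have := (Λ.factor p 0 0 (by rw [h, add_zero])).unique
    (y₁ := (Λ.ident (Λ.r p), p)) (y₂ := (p, Λ.ident (Λ.s p)))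
    ⟨hsr, Λ.ident_comp p hsr, Λ.d_ident _, h⟩ ⟨hsp, Λ.comp_ident p hsp, h, Λ.d_ident _⟩
  exact (congrArg Prod.fst this).symm

lemma pathsSet_zero (v : Λ.V) : Λ.pathsSet v 0 = {Λ.ident v} := by
  ext p
  constructor
  · rintro ⟨rfl, hd⟩
    exact Λ.eq_ident_of_d_eq_zero hd
  · rintro rfl
    exact ⟨Λ.r_ident v, Λ.d_ident v⟩

lemma toFinset_pathsSet_zero (hfin : Λ.RowFinite) (v : Λ.V) :
    (hfin v 0).toFinset = {Λ.ident v} := by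
  ext p
  rw [Set.Finite.mem_toFinset, pathsSet_zero, Finset.mem_singleton, Set.mem_singleton_iff]

lemma comp_injective {m n : Fin k → ℕ} {q t q' t' : Λ.P} (hc : Λ.s q = Λ.r t)
    (hc' : Λ.s q' = Λ.r t') (hq : Λ.d q = m) (ht : Λ.d t = n) (hq' : Λ.d q' = m)
    (ht' : Λ.d t' = n) (h : Λ.comp q t hc = Λ.comp q' t' hc') : q = q' ∧ t = t' := by
  have hd : Λ.d (Λ.comp q t hc) = m + n := by rw [Λ.d_comp, hq, ht]
  exact Prod.ext_iff.1 <| (Λ.factor _ m n hd).unique (y₁ := (q, t)) (y₂ := (q', t'))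
    ⟨hc, rfl, hq, ht⟩ ⟨hc', h.symm, hq', ht'⟩

/-- Unique factorization identifies `vΛ^{m+n}` with the pairs `(μ, ν)`, `μ ∈ vΛ^m`,
`ν ∈ s(μ)Λ^n`. -/
lemma sum_pathsSet_add (hfin : Λ.RowFinite) (v : Λ.V) (m n : Fin k → ℕ)
    {M : Type*} [AddCommMonoid M] (f : Λ.V → M) :
    ∑ p ∈ (hfin v (m + n)).toFinset, f (Λ.s p)
      = ∑ q ∈ (hfin v m).toFinset, ∑ t ∈ (hfin (Λ.s q) n).toFinset, f (Λ.s t) := by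
  have mem_sigma {x : Σ _ : Λ.P, Λ.P} :
      x ∈ (hfin v m).toFinset.sigma (fun q => (hfin (Λ.s q) n).toFinset) ↔
        (Λ.r x.1 = v ∧ Λ.d x.1 = m) ∧ Λ.r x.2 = Λ.s x.1 ∧ Λ.d x.2 = n := by
    simp
  rw [Finset.sum_sigma']
  symm
  refine Finset.sum_bij (fun x hx => Λ.comp x.1 x.2 (mem_sigma.1 hx).2.1.symm) ?_ ?_ ?_ ?_
  · rintro ⟨q, t⟩ hx
    obtain ⟨⟨hrq, hdq⟩, hrt, hdt⟩ := mem_sigma.1 hx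
    simp [Λ.r_comp, Λ.d_comp, hrq, hdq, hdt]
  · rintro ⟨q, t⟩ hx ⟨q', t'⟩ hx' h
    obtain ⟨⟨-, hdq⟩, hrt, hdt⟩ := mem_sigma.1 hx
    obtain ⟨⟨-, hdq'⟩, hrt', hdt'⟩ := mem_sigma.1 hx'
    obtain ⟨rfl, rfl⟩ := Λ.comp_injective _ _ hdq hdt hdq' hdt' h
    rfl
  · intro p hp
    obtain ⟨hrp, hdp⟩ := (hfin v (m + n)).mem_toFinset.1 hp
    obtain ⟨⟨q, t⟩, ⟨hc, hcomp, hdq, hdt⟩, -⟩ := Λ.factor p m n hdp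
    refine ⟨⟨q, t⟩, mem_sigma.2 ⟨⟨?_, hdq⟩, hc.symm, hdt⟩, hcomp⟩
    rw [← hrp, ← hcomp, Λ.r_comp]
  · rintro ⟨q, t⟩ -
    rw [Λ.s_comp]

section TalentedMonoid

variable (hfin : Λ.RowFinite)

lemma tmk_add (a b : TalF Λ) : tmk Λ hfin (a + b) = tmk Λ hfin a + tmk Λ hfin b :=
  map_add (TalCon Λ hfin).mk' a b

lemma tmk_sum {ι : Type*} (s : Finset ι) (f : ι → TalF Λ) :
    tmk Λ hfin (∑ i ∈ s, f i) = ∑ i ∈ s, tmk Λ hfin (f i) :=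
  map_sum (TalCon Λ hfin).mk' f s

lemma tmk_nsmul (c : ℕ) (a : TalF Λ) : tmk Λ hfin (c • a) = c • tmk Λ hfin a :=
  map_nsmul (TalCon Λ hfin).mk' c a

lemma tmk_surjective : Function.Surjective (tmk Λ hfin) :=
  AddCon.mk'_surjective

lemma tmk_eq_tmk_iff {a b : TalF Λ} : tmk Λ hfin a = tmk Λ hfin b ↔ TalCon Λ hfin a b :=
  AddCon.eq _

noncomputable def relationDegrees : AddSubmonoid (Fin k → ℕ) where
  carrier := {n | ∀ v m, tmk Λ hfin (Finsupp.single (v, m) 1) =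
    ∑ p ∈ (hfin v n).toFinset, tmk Λ hfin (Finsupp.single (Λ.s p, m + fun j => (n j : ℤ)) 1)}
  zero_mem' v m := by
    simp only [toFinset_pathsSet_zero, Finset.sum_singleton, Λ.s_ident, Pi.zero_apply,
      Nat.cast_zero]
    rw [← Pi.zero_def, add_zero]
  add_mem' {a b} ha hb v m := by
    rw [sum_pathsSet_add Λ hfin v a b
      (fun w => tmk Λ hfin (Finsupp.single (w, m + fun j => ((a + b) j : ℤ)) 1)), ha]
    refine Finset.sum_congr rfl fun q _ => ?_
    rw [hb, add_assoc]
    rfl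

lemma single_mem_relationDegrees (i : Fin k) : Pi.single i 1 ∈ relationDegrees Λ hfin := by
  intro v m
  have hcast : (fun j => ((Pi.single i 1 : Fin k → ℕ) j : ℤ)) = Pi.single i 1 := by
    ext j; by_cases h : j = i <;> simp [h]
  rw [hcast, ← tmk_sum, tmk_eq_tmk_iff]
  exact AddConGen.Rel.of _ _ ⟨v, m, i, rfl, rfl⟩

lemma mem_relationDegrees (n : Fin k → ℕ) : n ∈ relationDegrees Λ hfin := by
  classical
  induction n using Pi.single_induction with
  | zero => exact zero_mem _
  | add a b ha hb => exact add_mem ha hb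
  | single i c =>
    rw [show (Pi.single i c : Fin k → ℕ) = c • Pi.single i 1 by
      ext j; by_cases h : j = i <;> simp [h]]
    exact nsmul_mem (single_mem_relationDegrees Λ hfin i) c

lemma tmk_single_eq_sum_pathsSet (n : Fin k → ℕ) (v : Λ.V) (m : Fin k → ℤ) :
    tmk Λ hfin (Finsupp.single (v, m) 1) =
      ∑ p ∈ (hfin v n).toFinset, tmk Λ hfin (Finsupp.single (Λ.s p, m + fun j => (n j : ℤ)) 1) :=
  mem_relationDegrees Λ hfin n v m

lemma shiftF_single (p : Fin k → ℤ) (q : Λ.V × (Fin k → ℤ)) (c : ℕ) :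
    shiftF Λ p (Finsupp.single q c) = Finsupp.single (q.1, q.2 + p) c :=
  Finsupp.mapDomain_single

lemma shiftF_add (p : Fin k → ℤ) (a b : TalF Λ) :
    shiftF Λ p (a + b) = shiftF Λ p a + shiftF Λ p b :=
  Finsupp.mapDomain_add

lemma talCon_shiftF {p : Fin k → ℤ} {a b : TalF Λ} (h : TalCon Λ hfin a b) :
    TalCon Λ hfin (shiftF Λ p a) (shiftF Λ p b) := by
  refine (AddCon.addConGen_le (c := (TalCon Λ hfin).comap (shiftF Λ p) (shiftF_add Λ p))).2
    ?_ h
  rintro _ _ ⟨v, n, i, rfl, rfl⟩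
  refine AddConGen.Rel.of _ _ ⟨v, n + p, i, shiftF_single Λ p (v, n) 1, ?_⟩
  rw [shiftF, Finsupp.mapDomain_finsetSum]
  refine Finset.sum_congr rfl fun t _ => ?_
  rw [Finsupp.mapDomain_single, add_right_comm]

end TalentedMonoid

def SupportedOver (H : Set Λ.V) (a : TalF Λ) : Prop := ∀ q ∈ a.support, q.1 ∈ H

section SupportedOver

variable {Λ} {H : Set Λ.V}

lemma supportedOver_add_iff {a b : TalF Λ} :
    SupportedOver Λ H (a + b) ↔ SupportedOver Λ H a ∧ SupportedOver Λ H b := by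
  classical
  simp only [SupportedOver, Finsupp.support_add_eq_union, Finset.mem_union, or_imp, forall_and]

lemma supportedOver_single_one {q : Λ.V × (Fin k → ℤ)} :
    SupportedOver Λ H (Finsupp.single q 1) ↔ q.1 ∈ H := by
  simp [SupportedOver]

lemma supportedOver_sum_iff {ι : Type*} {s : Finset ι} {f : ι → TalF Λ} :
    SupportedOver Λ H (∑ i ∈ s, f i) ↔ ∀ i ∈ s, SupportedOver Λ H (f i) := by
  classical
  induction s using Finset.induction with
  | empty => simp [SupportedOver]
  | insert i s hi ih => simp [Finset.sum_insert hi, supportedOver_add_iff, ih]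

lemma SupportedOver.shiftF {a : TalF Λ} (ha : SupportedOver Λ H a) (p : Fin k → ℤ) :
    SupportedOver Λ H (shiftF Λ p a) := by
  classical
  intro q hq
  obtain ⟨q', hq', rfl⟩ := Finset.mem_image.1 (Finsupp.mapDomain_support hq)
  exact ha q' hq'

lemma talCon_supportedOver_iff (hfin : Λ.RowFinite) (hher : Hereditary Λ H)
    (hsat : Saturated Λ H) {a b : TalF Λ} (h : TalCon Λ hfin a b) :
    SupportedOver Λ H a ↔ SupportedOver Λ H b := by
  refine h.iff_of_add_iff (fun _ _ => supportedOver_add_iff) ?_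
  rintro _ _ ⟨v, n, i, rfl, rfl⟩
  simp only [supportedOver_sum_iff, supportedOver_single_one, Set.Finite.mem_toFinset,
    mem_pathsSet, and_imp]
  exact ⟨fun hv p hp _ => hher p (hp ▸ hv), hsat v _⟩

end SupportedOver

section OrderIdeals

variable {Λ} {hfin : Λ.RowFinite}

/-- The set `H_J` of the paper. -/
def idealVertices (J : Set (Tal Λ hfin)) : Set Λ.V :=
  {v | tmk Λ hfin (Finsupp.single (v, 0) 1) ∈ J}

lemma genIdeal_mono {X Y : Set Λ.V} (h : X ⊆ Y) : genIdeal Λ hfin X ⊆ genIdeal Λ hfin Y :=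
  fun _ ⟨b, hb, z, hz⟩ => ⟨b, fun q hq => h (hb q hq), z, hz⟩

lemma isOrderIdeal_genIdeal (X : Set Λ.V) : IsOrderIdeal Λ hfin (genIdeal Λ hfin X) := by
  refine ⟨⟨0, by simp, 0, by simp [tmk]⟩, ?_, ?_, ?_⟩
  · rintro _ _ ⟨b₁, hb₁, z₁, hz₁⟩ ⟨b₂, hb₂, z₂, hz₂⟩
    refine ⟨b₁ + b₂, supportedOver_add_iff.2 ⟨hb₁, hb₂⟩, z₁ + z₂, ?_⟩
    rw [tmk_add, ← hz₁, ← hz₂, add_add_add_comm]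
  · rintro x y ⟨b, hb, z, hz⟩
    exact ⟨b, hb, y + z, by rw [← add_assoc, hz]⟩
  · rintro p a ⟨b, hb, z, hz⟩
    obtain ⟨c, rfl⟩ := tmk_surjective Λ hfin z
    rw [← tmk_add, tmk_eq_tmk_iff] at hz
    refine ⟨shiftF Λ p b, SupportedOver.shiftF hb p, tmk Λ hfin (shiftF Λ p c), ?_⟩
    rw [← tmk_add, ← shiftF_add, tmk_eq_tmk_iff]
    exact talCon_shiftF Λ hfin hz

lemma idealVertices_genIdeal {H : Set Λ.V} (hher : Hereditary Λ H) (hsat : Saturated Λ H) :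
    idealVertices (genIdeal Λ hfin H) = H := by
  refine subset_antisymm ?_ fun v hv => ?_
  · rintro v ⟨b, hb, z, hz⟩
    obtain ⟨c, rfl⟩ := tmk_surjective Λ hfin z
    rw [← tmk_add, tmk_eq_tmk_iff] at hz
    have hsupp := (talCon_supportedOver_iff hfin hher hsat hz).2 hb
    exact supportedOver_single_one.1 (supportedOver_add_iff.1 hsupp).1
  · exact ⟨Finsupp.single (v, 0) 1, supportedOver_single_one.2 hv, 0, add_zero _⟩

namespace IsOrderIdeal

variable {J : Set (Tal Λ hfin)}

def toAddSubmonoid (hJ : IsOrderIdeal Λ hfin J) : AddSubmonoid (Tal Λ hfin) where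
  carrier := J
  zero_mem' := hJ.1
  add_mem' := hJ.2.1 _ _

lemma single_mem_iff (hJ : IsOrderIdeal Λ hfin J) (v : Λ.V) (n m : Fin k → ℤ) :
    tmk Λ hfin (Finsupp.single (v, n) 1) ∈ J ↔ tmk Λ hfin (Finsupp.single (v, m) 1) ∈ J := by
  have shift (n m : Fin k → ℤ) (h : tmk Λ hfin (Finsupp.single (v, n) 1) ∈ J) :
      tmk Λ hfin (Finsupp.single (v, m) 1) ∈ J := by
    simpa [shiftF_single] using hJ.2.2.2 (m - n) _ h
  exact ⟨shift n m, shift m n⟩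

lemma tmk_mem_iff (hJ : IsOrderIdeal Λ hfin J) (a : TalF Λ) :
    tmk Λ hfin a ∈ J ↔ SupportedOver Λ (idealVertices J) a := by
  constructor
  · intro ha q hq
    obtain ⟨c, rfl⟩ := exists_add_of_le (Finsupp.single_le_iff.2 (Finsupp.mem_support_iff.1 hq
      |> Nat.one_le_iff_ne_zero.2))
    rw [tmk_add] at ha
    exact (hJ.single_mem_iff q.1 q.2 0).1 (hJ.2.2.1 _ _ ha)
  · intro ha
    rw [← Finsupp.sum_single a, Finsupp.sum, tmk_sum]
    refine AddSubmonoid.sum_mem hJ.toAddSubmonoid fun q hq => ?_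
    rw [← Finsupp.smul_single_one, tmk_nsmul]
    exact nsmul_mem ((hJ.single_mem_iff q.1 0 q.2).1 (ha q hq)) _

lemma mem_idealVertices_iff (hJ : IsOrderIdeal Λ hfin J) (v : Λ.V) (n : Fin k → ℕ) :
    v ∈ idealVertices J ↔ ∀ p, Λ.r p = v → Λ.d p = n → Λ.s p ∈ idealVertices J := by
  change tmk Λ hfin (Finsupp.single (v, 0) 1) ∈ J ↔ _
  rw [tmk_single_eq_sum_pathsSet Λ hfin n, ← tmk_sum, hJ.tmk_mem_iff, supportedOver_sum_iff]
  simp [supportedOver_single_one]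

lemma hereditary_idealVertices (hJ : IsOrderIdeal Λ hfin J) : Hereditary Λ (idealVertices J) :=
  fun p hp => (hJ.mem_idealVertices_iff _ (Λ.d p)).1 hp p rfl rfl

lemma saturated_idealVertices (hJ : IsOrderIdeal Λ hfin J) : Saturated Λ (idealVertices J) :=
  fun v n => (hJ.mem_idealVertices_iff v n).2

lemma genIdeal_idealVertices (hJ : IsOrderIdeal Λ hfin J) :
    genIdeal Λ hfin (idealVertices J) = J := by
  refine subset_antisymm ?_ fun x hx => ?_
  · rintro x ⟨b, hb, z, hz⟩
    exact hJ.2.2.1 x z (hz ▸ (hJ.tmk_mem_iff b).2 hb)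
  · obtain ⟨a, rfl⟩ := tmk_surjective Λ hfin x
    exact ⟨a, (hJ.tmk_mem_iff a).1 hx, 0, add_zero _⟩

end IsOrderIdeal

end OrderIdeals

end KGraph

open KGraph in
theorem stmt12_general {k : ℕ} (Λ : KGraph k) (hfin : Λ.RowFinite) :
    (∀ H : Set Λ.V, Hereditary Λ H → Saturated Λ H →
      IsOrderIdeal Λ hfin (genIdeal Λ hfin H)) ∧
    (∀ J : Set (Tal Λ hfin), IsOrderIdeal Λ hfin J →
      Hereditary Λ {v | tmk Λ hfin (Finsupp.single (v, (0 : Fin k → ℤ)) 1) ∈ J} ∧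
      Saturated Λ {v | tmk Λ hfin (Finsupp.single (v, (0 : Fin k → ℤ)) 1) ∈ J}) ∧
    (∀ H : Set Λ.V, Hereditary Λ H → Saturated Λ H →
      {v | tmk Λ hfin (Finsupp.single (v, (0 : Fin k → ℤ)) 1) ∈ genIdeal Λ hfin H} = H) ∧
    (∀ J : Set (Tal Λ hfin), IsOrderIdeal Λ hfin J →
      genIdeal Λ hfin {v | tmk Λ hfin (Finsupp.single (v, (0 : Fin k → ℤ)) 1) ∈ J} = J) ∧
    (∀ H₁ H₂ : Set Λ.V, H₁ ⊆ H₂ → genIdeal Λ hfin H₁ ⊆ genIdeal Λ hfin H₂) ∧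
    (∀ J₁ J₂ : Set (Tal Λ hfin), J₁ ⊆ J₂ →
      {v | tmk Λ hfin (Finsupp.single (v, (0 : Fin k → ℤ)) 1) ∈ J₁} ⊆
      {v | tmk Λ hfin (Finsupp.single (v, (0 : Fin k → ℤ)) 1) ∈ J₂}) :=
  ⟨fun H _ _ => isOrderIdeal_genIdeal H,
    fun _ hJ => ⟨hJ.hereditary_idealVertices, hJ.saturated_idealVertices⟩,
    fun _ hher hsat => idealVertices_genIdeal hher hsat,
    fun _ hJ => hJ.genIdeal_idealVertices,
    fun _ _ => genIdeal_mono,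
    fun _ _ h _ hv => h hv⟩

open KGraph in
/-- The assignments `H ↦ ⟨H⟩` and `J ↦ H_J` are mutually inverse order-preserving
bijections between the lattice of hereditary saturated subsets of `Λ⁰` and the
lattice of `ℤᵏ`-order ideals of `T_Λ`; hence the two lattices are isomorphic. -/
theorem stmt12 {k : ℕ} (Λ : KGraph k) (hfin : Λ.RowFinite) (hns : Λ.NoSources) :
    (∀ H : Set Λ.V, Hereditary Λ H → Saturated Λ H →
      IsOrderIdeal Λ hfin (genIdeal Λ hfin H)) ∧
    (∀ J : Set (Tal Λ hfin), IsOrderIdeal Λ hfin J →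
      Hereditary Λ {v | tmk Λ hfin (Finsupp.single (v, (0 : Fin k → ℤ)) 1) ∈ J} ∧
      Saturated Λ {v | tmk Λ hfin (Finsupp.single (v, (0 : Fin k → ℤ)) 1) ∈ J}) ∧
    (∀ H : Set Λ.V, Hereditary Λ H → Saturated Λ H →
      {v | tmk Λ hfin (Finsupp.single (v, (0 : Fin k → ℤ)) 1) ∈ genIdeal Λ hfin H} = H) ∧
    (∀ J : Set (Tal Λ hfin), IsOrderIdeal Λ hfin J →
      genIdeal Λ hfin {v | tmk Λ hfin (Finsupp.single (v, (0 : Fin k → ℤ)) 1) ∈ J} = J) ∧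
    (∀ H₁ H₂ : Set Λ.V, H₁ ⊆ H₂ → genIdeal Λ hfin H₁ ⊆ genIdeal Λ hfin H₂) ∧
    (∀ J₁ J₂ : Set (Tal Λ hfin), J₁ ⊆ J₂ →
      {v | tmk Λ hfin (Finsupp.single (v, (0 : Fin k → ℤ)) 1) ∈ J₁} ⊆
      {v | tmk Λ hfin (Finsupp.single (v, (0 : Fin k → ℤ)) 1) ∈ J₂}) :=
  stmt12_general Λ hfin
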